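/- arXiv:1304.1226 — 4 statements merged into one kernel-verified Lean document; each statement's English description precedes it below -/
import Mathlib

section
/- Euler's putative identity fails for all sufficiently large n: there exists N such that for all n ≥ N, 3·C(n+1, 0)₂ − C(n+2, 0)₂ ≠ Fₙ·(Fₙ + 1). In particular, the set of natural numbers n for which 3·C(n+1, 0)₂ − C(n+2, 0)₂ = Fₙ·(Fₙ + 1) is finite. -/
/-!
Writing `d n j = C(n, j)₂ - C(n, j + 1)₂`, the left-hand side is `2 * d n 1`. The differences are
nonnegative and obey `d (n + 1) (j + 1) = d n j + d n (j + 1) + d n (j + 2)`, the adjacency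
recursion of a path (plus loops). Comparing `d n` with the positive sub-eigenvector
`(3, 5, 6, 5, 3)` shows `d n 1 ≥ c (8 / 3) ^ n`, whereas `F n ≤ (13 / 8) ^ n` bounds the
right-hand side by `2 (169 / 64) ^ n`, and `169 / 64 < 8 / 3`.
-/

open LaurentPolynomial

/-- The trinomial coefficient `C(n, j)₂`: the coefficient of `x^j` in
`(x⁻¹ + 1 + x)^n`, viewed in the ring of Laurent polynomials `ℤ[T;T⁻¹]`. -/
noncomputable def trinom (n : ℕ) (j : ℤ) : ℤ :=
  (((T (-1) + 1 + T 1 : ℤ[T;T⁻¹])) ^ n).coeff j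

open Filter

lemma LaurentPolynomial.coeff_T_mul {R : Type*} [Semiring R] (a j : ℤ) (f : R[T;T⁻¹]) :
    (T a * f).coeff j = f.coeff (j - a) := by
  rw [T, AddMonoidAlgebra.coeff_single_mul_apply, one_mul, neg_add_eq_sub]

lemma trinom_zero (j : ℤ) : trinom 0 j = if j = 0 then 1 else 0 := by
  simp [trinom, ← T_zero, eq_comm]

lemma trinom_succ (n : ℕ) (j : ℤ) :
    trinom (n + 1) j = trinom n (j + 1) + trinom n j + trinom n (j - 1) := by
  simp only [trinom, pow_succ', add_mul, one_mul, AddMonoidAlgebra.coeff_add, Finsupp.add_apply,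
    coeff_T_mul, sub_neg_eq_add]

lemma trinom_neg (n : ℕ) (j : ℤ) : trinom n (-j) = trinom n j := by
  have : invert (T (-1) + 1 + T 1 : ℤ[T;T⁻¹]) = T (-1) + 1 + T 1 := by
    simp only [map_add, map_one, invert_T, neg_neg]; ring
  rw [trinom, ← invert_apply, map_pow, this, trinom]

noncomputable def trinomDiff (n j : ℕ) : ℤ := trinom n j - trinom n (j + 1)

lemma trinomDiff_succ_zero (n : ℕ) : trinomDiff (n + 1) 0 = trinomDiff n 1 := by
  simp only [trinomDiff, trinom_succ, Nat.cast_zero, zero_sub, trinom_neg]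
  push_cast; ring

lemma trinomDiff_succ_succ (n j : ℕ) :
    trinomDiff (n + 1) (j + 1) = trinomDiff n j + trinomDiff n (j + 1) + trinomDiff n (j + 2) := by
  simp only [trinomDiff, trinom_succ]
  push_cast; ring_nf

lemma trinomDiff_nonneg (n j : ℕ) : 0 ≤ trinomDiff n j := by
  induction n generalizing j with
  | zero => rcases j with _ | j <;> simp [trinomDiff, trinom_zero]; omega
  | succ n ih =>
    rcases j with _ | j
    · exact trinomDiff_succ_zero n ▸ ih 1
    · rw [trinomDiff_succ_succ]; linarith [ih j, ih (j + 1), ih (j + 2)]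

lemma trinomDiff_le_succ (n j : ℕ) : trinomDiff n (j + 1) ≤ trinomDiff (n + 1) (j + 1) := by
  rw [trinomDiff_succ_succ]; linarith [trinomDiff_nonneg n j, trinomDiff_nonneg n (j + 2)]

lemma one_le_trinomDiff_self (n : ℕ) : 1 ≤ trinomDiff n n := by
  induction n with
  | zero => simp [trinomDiff, trinom_zero]
  | succ n ih =>
    rw [trinomDiff_succ_succ]; linarith [trinomDiff_nonneg n (n + 1), trinomDiff_nonneg n (n + 2)]

lemma one_le_trinomDiff {n j : ℕ} (hj : 1 ≤ j) (hjn : j ≤ n) : 1 ≤ trinomDiff n j := by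
  induction n, hjn using Nat.le_induction with
  | base => exact one_le_trinomDiff_self j
  | succ n _ ih =>
    obtain ⟨i, rfl⟩ := Nat.exists_eq_add_of_le' hj
    exact ih.trans (trinomDiff_le_succ n i)

lemma pow_mul_le_trinomDiff {w : ℕ → ℝ} {μ C : ℝ} (hμ : 0 ≤ μ) (hC : 0 ≤ C) (hw₀ : w 0 ≤ 0)
    (hw : ∀ j, μ * w (j + 1) ≤ w j + w (j + 1) + w (j + 2)) {n₀ : ℕ}
    (hbase : ∀ j, w j ≤ C * trinomDiff n₀ j) (m j : ℕ) :
    μ ^ m * w j ≤ C * trinomDiff (n₀ + m) j := by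
  induction m generalizing j with
  | zero => simpa using hbase j
  | succ m ih =>
    rw [← add_assoc]
    rcases j with _ | j
    · have : (0 : ℝ) ≤ trinomDiff (n₀ + m + 1) 0 := by exact_mod_cast trinomDiff_nonneg _ _
      exact (mul_nonpos_of_nonneg_of_nonpos (pow_nonneg hμ _) hw₀).trans (mul_nonneg hC this)
    · calc μ ^ (m + 1) * w (j + 1) = μ ^ m * (μ * w (j + 1)) := by ring
        _ ≤ μ ^ m * (w j + w (j + 1) + w (j + 2)) := by gcongr; exact hw j
        _ ≤ C * trinomDiff (n₀ + m) j + C * trinomDiff (n₀ + m) (j + 1)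
              + C * trinomDiff (n₀ + m) (j + 2) := by
          simp only [mul_add]; linarith [ih j, ih (j + 1), ih (j + 2)]
        _ = C * trinomDiff (n₀ + m + 1) (j + 1) := by
          rw [trinomDiff_succ_succ]; push_cast; ring

/-- Rounds down the Perron eigenvector `(1, √3, 2, √3, 1)` of the path on five vertices
(eigenvalue `1 + √3`), keeping the growth ratio `8 / 3` above `φ² ≈ 2.618`. -/
def pathWeight : ℕ → ℝ
  | 0 => 0
  | 1 => 3
  | 2 => 5
  | 3 => 6
  | 4 => 5
  | 5 => 3
  | _ + 6 => 0

lemma eight_div_three_mul_pathWeight_le (j : ℕ) :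
    8 / 3 * pathWeight (j + 1) ≤ pathWeight j + pathWeight (j + 1) + pathWeight (j + 2) := by
  rcases j with _ | _ | _ | _ | _ | _ | j <;> norm_num [pathWeight]

lemma pathWeight_le_trinomDiff (j : ℕ) : pathWeight j ≤ 6 * trinomDiff 5 j := by
  have hnonneg : (0 : ℝ) ≤ trinomDiff 5 j := by exact_mod_cast trinomDiff_nonneg 5 j
  by_cases hj : 1 ≤ j ∧ j ≤ 5
  · obtain ⟨hj₁, hj₅⟩ := hj
    have : (1 : ℝ) ≤ trinomDiff 5 j := by exact_mod_cast one_le_trinomDiff hj₁ hj₅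
    interval_cases j <;> norm_num [pathWeight] <;> linarith
  · rcases j with _ | _ | _ | _ | _ | _ | j <;> simp_all [pathWeight]

lemma eight_div_three_pow_le_trinomDiff_one {n : ℕ} (hn : 5 ≤ n) :
    (8 / 3 : ℝ) ^ n ≤ 2 * (8 / 3) ^ 5 * trinomDiff n 1 := by
  obtain ⟨m, rfl⟩ := Nat.exists_eq_add_of_le hn
  have := pow_mul_le_trinomDiff (by norm_num) (by norm_num) le_rfl eight_div_three_mul_pathWeight_le
    pathWeight_le_trinomDiff m 1
  rw [pow_add]
  norm_num [pathWeight] at this ⊢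
  linarith

lemma Nat.fib_le_pow {R : Type*} [CommSemiring R] [PartialOrder R] [IsOrderedRing R] {r : R}
    (h₁ : 1 ≤ r) (hr : r + 1 ≤ r ^ 2) (n : ℕ) : (fib n : R) ≤ r ^ n := by
  induction n using Nat.twoStepInduction with
  | zero => simp
  | one => simpa using h₁
  | more n ih₀ ih₁ =>
    calc (fib (n + 2) : R) = fib n + fib (n + 1) := by rw [fib_add_two, cast_add]
      _ ≤ r ^ n + r ^ (n + 1) := _root_.add_le_add ih₀ ih₁
      _ = r ^ n * (r + 1) := by ring
      _ ≤ r ^ n * r ^ 2 := mul_le_mul_of_nonneg_left hr (pow_nonneg (zero_le_one.trans h₁) n)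
      _ = r ^ (n + 2) := by ring

lemma fib_mul_fib_add_one_le (n : ℕ) :
    (Nat.fib n : ℝ) * (Nat.fib n + 1) ≤ 2 * (169 / 64) ^ n := by
  have hfib := Nat.fib_le_pow (r := (13 / 8 : ℝ)) (by norm_num) (by norm_num) n
  have hone : (1 : ℝ) ≤ (13 / 8) ^ n := one_le_pow₀ (by norm_num)
  calc (Nat.fib n : ℝ) * (Nat.fib n + 1) ≤ (13 / 8) ^ n * (2 * (13 / 8) ^ n) := by
        gcongr; linarith
    _ = 2 * (169 / 64) ^ n := by rw [mul_left_comm, ← mul_pow]; norm_num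

lemma eventually_mul_pow_lt_pow {a b : ℝ} (ha : 0 < a) (hab : a < b) (C : ℝ) :
    ∀ᶠ n in atTop, C * a ^ n < b ^ n := by
  filter_upwards [(tendsto_pow_atTop_atTop_of_one_lt ((one_lt_div ha).2 hab)).eventually_gt_atTop C]
    with n hn
  rwa [div_pow, lt_div_iff₀ (by positivity)] at hn

lemma three_mul_trinom_sub_trinom (n : ℕ) :
    3 * trinom (n + 1) 0 - trinom (n + 2) 0 = 2 * trinomDiff n 1 := by
  rw [← trinomDiff_succ_zero, trinomDiff, trinom_succ (n + 1), zero_sub, trinom_neg]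
  push_cast; ring

/-- Euler's putative identity fails for all sufficiently large `n`; in particular
the set of `n` for which it holds is finite. -/
theorem euler_identity_eventually_fails :
    (∃ N : ℕ, ∀ n : ℕ, N ≤ n →
      3 * trinom (n + 1) 0 - trinom (n + 2) 0 ≠ (Nat.fib n : ℤ) * ((Nat.fib n : ℤ) + 1)) ∧
    {n : ℕ |
      3 * trinom (n + 1) 0 - trinom (n + 2) 0 = (Nat.fib n : ℤ) * ((Nat.fib n : ℤ) + 1)}.Finite := by
  have hlt : ∀ᶠ n in atTop,
      (Nat.fib n : ℤ) * ((Nat.fib n : ℤ) + 1) < 3 * trinom (n + 1) 0 - trinom (n + 2) 0 := by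
    filter_upwards [eventually_ge_atTop 5,
      eventually_mul_pow_lt_pow (by norm_num) (by norm_num : (169 / 64 : ℝ) < 8 / 3) (2 * (8 / 3) ^ 5)]
      with n hn hpow
    have hd : (169 / 64 : ℝ) ^ n < trinomDiff n 1 :=
      lt_of_mul_lt_mul_left (hpow.trans_le (eight_div_three_pow_le_trinomDiff_one hn)) (by positivity)
    have : (Nat.fib n : ℝ) * (Nat.fib n + 1) < 2 * trinomDiff n 1 := by
      linarith [fib_mul_fib_add_one_le n]
    rw [three_mul_trinom_sub_trinom]
    exact_mod_cast this
  have hne := hlt.mono fun n h => h.ne'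
  refine ⟨eventually_atTop.mp hne, ?_⟩
  simpa [← Nat.cofinite_eq_atTop, eventually_cofinite] using hne
end

section
/- Let P be a Laurent polynomial with integer coefficients, let k ≥ 1 be an integer, and for each residue a with 0 ≤ a < k define A(n, k, a) := Σ_{j∈ℤ} [coefficient of x^(kj+a) in Pⁿ]. Then there exist integers d₁, d₂, …, d_k (independent of a) such that for every residue a with 0 ≤ a < k and every natural number n, A(n+k, k, a) = Σ_{i=1}^{k} dᵢ · A(n+k−i, k, a). In other words, the k sequences (A(n, k, a))_{n≥0} all satisfy one and the same homogeneous linear recurrence with constant coefficients of order k. -/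
open LaurentPolynomial

/-- The generalized Euler–Andrews sum `A(n, k, a) = Σ_{j∈ℤ} [coefficient of x^(kj+a) in Pⁿ]`,
where the coefficients are taken in the ring of Laurent polynomials `ℤ[T;T⁻¹]`. -/
noncomputable def genA (P : ℤ[T;T⁻¹]) (k : ℕ) (n : ℕ) (a : ℤ) : ℤ :=
  ∑ᶠ j : ℤ, (P ^ n).coeff ((k : ℤ) * j + a)

/-!
Reducing exponents modulo `k` (i.e. working modulo `x^k - 1`) sends `P` to an element `Q` of the
group ring `ℤ[ZMod k]`, and `A(n, k, a)` is the coefficient of `Qⁿ` at `a`. This ring is free of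
rank `k` over `ℤ`, so by Cayley–Hamilton for multiplication by `Q` the powers of `Q` satisfy a
linear recurrence of order `k` (read off the characteristic polynomial), and taking the
coefficient at `a` transfers it to every sequence `A(·, k, a)`.
-/

open Polynomial Module Finset

theorem pow_add_natDegree_eq_sum_of_aeval_eq_zero {R A : Type*} [CommRing R] [Ring A]
    [Algebra R A] {p : R[X]} (hp : p.Monic) {Q : A} (hQ : aeval Q p = 0) (n : ℕ) :
    Q ^ (n + p.natDegree) = ∑ i : Fin p.natDegree,
      -p.coeff (p.natDegree - (i + 1)) • Q ^ (n + p.natDegree - (i + 1)) := by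
  set r := p.natDegree
  have hQr : Q ^ r = -∑ i ∈ range r, p.coeff i • Q ^ i := by
    rw [hp.as_sum] at hQ
    simp only [map_add, map_pow, aeval_X, map_sum, map_mul, aeval_C, ← Algebra.smul_def] at hQ
    exact eq_neg_of_add_eq_zero_left hQ
  calc Q ^ (n + r) = ∑ i ∈ range r, -p.coeff i • Q ^ (n + i) := by
        simp_rw [pow_add Q n, hQr, mul_neg, mul_sum, mul_smul_comm, ← pow_add, neg_smul,
          sum_neg_distrib]
    _ = ∑ i ∈ range r, -p.coeff (r - 1 - i) • Q ^ (n + (r - 1 - i)) :=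
        (sum_range_reflect (fun i => -p.coeff i • Q ^ (n + i)) r).symm
    _ = _ := by
        rw [← Fin.sum_univ_eq_sum_range]
        refine sum_congr rfl fun i _ => ?_
        rw [show r - 1 - i = r - (i + 1) by omega,
          show n + (r - (i + 1)) = n + r - (i + 1) by omega]

theorem Algebra.exists_monic_natDegree_eq_finrank_aeval_eq_zero {R A : Type*} [CommRing R]
    [Nontrivial R] [Ring A] [Algebra R A] [Module.Free R A] [Module.Finite R A] (Q : A) :
    ∃ p : R[X], p.Monic ∧ p.natDegree = finrank R A ∧ aeval Q p = 0 := by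
  set f := Algebra.lmul R A Q
  refine ⟨f.charpoly, f.charpoly_monic, f.charpoly_natDegree, ?_⟩
  have hf : Algebra.lmul R A (aeval Q f.charpoly) = 0 := by
    rw [← aeval_algHom_apply, f.aeval_self_charpoly]
  simpa using LinearMap.congr_fun hf 1

theorem exists_pow_add_eq_sum_of_finrank_eq {R A : Type*} [CommRing R] [Nontrivial R] [Ring A]
    [Algebra R A] [Module.Free R A] [Module.Finite R A] {r : ℕ} (hr : finrank R A = r) (Q : A) :
    ∃ d : Fin r → R, ∀ n, Q ^ (n + r) = ∑ i : Fin r, d i • Q ^ (n + r - (i + 1)) := by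
  obtain ⟨p, hp, hdeg, hQ⟩ := Algebra.exists_monic_natDegree_eq_finrank_aeval_eq_zero (R := R) Q
  subst hr
  rw [← hdeg]
  exact ⟨_, pow_add_natDegree_eq_sum_of_aeval_eq_zero hp hQ⟩

theorem range_mul_add_eq_setOf_intCast_eq (k : ℕ) (a : ℤ) :
    Set.range (fun j : ℤ => (k : ℤ) * j + a) = {x : ℤ | (x : ZMod k) = a} := by
  ext x
  simp only [Set.mem_range, Set.mem_ofPred_eq, ZMod.intCast_eq_intCast_iff_dvd_sub, dvd_def]
  exact ⟨fun ⟨j, hj⟩ => ⟨-j, by linarith⟩, fun ⟨j, hj⟩ => ⟨-j, by linarith⟩⟩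

theorem finsum_coeff_mul_add_eq_coeff_mapDomain {R : Type*} [Semiring R] (k : ℕ) [NeZero k]
    (F : R[T;T⁻¹]) (a : ℤ) :
    ∑ᶠ j : ℤ, F.coeff ((k : ℤ) * j + a) =
      (AddMonoidAlgebra.mapDomainRingHom R (Int.castAddHom (ZMod k)) F).coeff a := by
  classical
  have hinj : Function.Injective fun j : ℤ => (k : ℤ) * j + a := fun _ _ h =>
    mul_left_cancel₀ (by exact_mod_cast NeZero.ne k) (add_right_cancel h)
  rw [← finsum_mem_range hinj, range_mul_add_eq_setOf_intCast_eq,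
    finsum_mem_eq_sum_filter _ _ F.coeff.hasFiniteSupport,
    AddMonoidAlgebra.mapDomainRingHom_apply, AddMonoidAlgebra.mapDomain,
    AddMonoidAlgebra.coeff_ofCoeff, Int.coe_castAddHom, Finsupp.mapDomain_apply_eq_sum]
  simp only [Set.mem_ofPred_eq, Finsupp.fun_support_eq, Set.toFinite_toFinset, toFinset_coe]

/-- The `k` sequences `n ↦ A(n, k, a)` all satisfy one and the same homogeneous linear
recurrence with constant coefficients of order `k`. -/
theorem genA_cfinite (P : ℤ[T;T⁻¹]) (k : ℕ) (hk : 1 ≤ k) :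
    ∃ d : Fin k → ℤ, ∀ a : ℤ, 0 ≤ a → a < (k : ℤ) → ∀ n : ℕ,
      genA P k (n + k) a = ∑ i : Fin k, d i * genA P k (n + k - ((i : ℕ) + 1)) a := by
  have : NeZero k := ⟨by omega⟩
  set reduce := AddMonoidAlgebra.mapDomainRingHom ℤ (Int.castAddHom (ZMod k))
  have hgenA (m : ℕ) (a : ℤ) : genA P k m a = (reduce P ^ m).coeff a := by
    rw [genA, finsum_coeff_mul_add_eq_coeff_mapDomain, map_pow]
  have hrank : finrank ℤ (AddMonoidAlgebra ℤ (ZMod k)) = k := by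
    simpa using finrank_eq_card_basis (AddMonoidAlgebra.basis (ZMod k) ℤ)
  obtain ⟨d, hd⟩ := exists_pow_add_eq_sum_of_finrank_eq hrank (reduce P)
  refine ⟨d, fun a _ _ n => ?_⟩
  simp only [hgenA, hd n, AddMonoidAlgebra.coeff_sum, Finsupp.finsetSum_apply,
    AddMonoidAlgebra.coeff_smul_apply, smul_eq_mul]
end

section
/- The central trinomial coefficients Tₙ := C(n, 0)₂ satisfy the three-term linear recurrence with polynomial coefficients (n + 2)·Tₙ₊₂ = (2n + 3)·Tₙ₊₁ + 3(n + 1)·Tₙ for all natural numbers n. -/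
/-!
Since `x⁻¹ + 1 + x = x⁻¹ (1 + x + x²)`, the central coefficient `Tₙ` is the coefficient of `xⁿ`
in `Pⁿ`, where `P = 1 + x + x²`. With `g = (1 - x²) Pⁿ⁺¹`, one checks the polynomial identity
`x g' + (n+2) Pⁿ⁺² = (n+2) g + (2n+3) x Pⁿ⁺¹ + 3(n+1) x² Pⁿ`.
The Euler operator `x d/dx` multiplies the coefficient of `xⁿ⁺²` by `n + 2`, so on comparing
coefficients of `xⁿ⁺²` the contributions of `g` cancel and the recurrence remains.
-/

open LaurentPolynomial

open Polynomial

section Semiring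

variable {R : Type*} [Semiring R]

lemma LaurentPolynomial.coeff_mul_T (f : R[T;T⁻¹]) (m n : ℤ) :
    (f * T m).coeff n = f.coeff (n - m) := by
  rw [T, AddMonoidAlgebra.coeff_mul_single_apply, mul_one, sub_eq_add_neg]

lemma Polynomial.coeff_toLaurent_natCast (f : R[X]) (k : ℕ) :
    (toLaurent f).coeff k = f.coeff k := by
  rw [coeff_toLaurent]
  exact Finsupp.mapDomain_apply Nat.cast_injective _ k

lemma Polynomial.coeff_X_mul_derivative (p : R[X]) (k : ℕ) :
    (X * derivative p).coeff k = k * p.coeff k := by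
  cases k with
  | zero => simp
  | succ k => rw [coeff_X_mul, coeff_derivative, ← Nat.cast_succ, Nat.cast_comm]

end Semiring

lemma trinomial_eq_toLaurent_mul_T :
    (T (-1) + 1 + T 1 : ℤ[T;T⁻¹]) = toLaurent (1 + X + X ^ 2 : ℤ[X]) * T (-1) := by
  simp only [map_add, map_one, map_pow, toLaurent_X, T_pow, add_mul, one_mul, ← T_add]
  norm_num

lemma trinom_sub_eq_coeff (n k : ℕ) :
    trinom n (k - n : ℤ) = ((1 + X + X ^ 2 : ℤ[X]) ^ n).coeff k := by
  rw [trinom, trinomial_eq_toLaurent_mul_T, mul_pow, T_pow, ← map_pow, coeff_mul_T,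
    mul_neg_one, sub_neg_eq_add, sub_add_cancel, coeff_toLaurent_natCast]

lemma trinom_zero_eq_coeff (n : ℕ) :
    trinom n 0 = ((1 + X + X ^ 2 : ℤ[X]) ^ n).coeff n := by
  simpa using trinom_sub_eq_coeff n n

section CommRing

variable {R : Type*} [CommRing R]

lemma trinomial_pow_differential_identity (n : ℕ) :
    X * derivative ((1 - X ^ 2) * (1 + X + X ^ 2 : R[X]) ^ (n + 1))
        + Polynomial.C ((n : R) + 2) * (1 + X + X ^ 2) ^ (n + 2) =
      Polynomial.C ((n : R) + 2) * ((1 - X ^ 2) * (1 + X + X ^ 2) ^ (n + 1))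
        + Polynomial.C (2 * (n : R) + 3) * ((1 + X + X ^ 2) ^ (n + 1) * X)
        + Polynomial.C (3 * ((n : R) + 1)) * ((1 + X + X ^ 2) ^ n * X ^ 2) := by
  simp only [derivative_mul, derivative_pow, derivative_sub, derivative_one, derivative_X,
    map_add, map_mul, map_natCast, map_ofNat, map_one]
  push_cast
  ring

theorem coeff_trinomial_pow_recurrence (n : ℕ) :
    ((n : R) + 2) * ((1 + X + X ^ 2 : R[X]) ^ (n + 2)).coeff (n + 2) =
      (2 * n + 3) * ((1 + X + X ^ 2 : R[X]) ^ (n + 1)).coeff (n + 1)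
        + 3 * (n + 1) * ((1 + X + X ^ 2 : R[X]) ^ n).coeff n := by
  have h := congrArg (coeff · (n + 2)) (trinomial_pow_differential_identity (R := R) n)
  simp only [coeff_add, coeff_X_mul_derivative, coeff_C_mul, coeff_mul_X, coeff_mul_X_pow] at h
  push_cast at h
  linear_combination h

end CommRing

/-- The central trinomial coefficients satisfy the three-term recurrence with
polynomial coefficients `(n+2)·Tₙ₊₂ = (2n+3)·Tₙ₊₁ + 3(n+1)·Tₙ`. -/
theorem central_trinomial_recurrence (n : ℕ) :
    ((n : ℤ) + 2) * trinom (n + 2) 0 =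
      (2 * (n : ℤ) + 3) * trinom (n + 1) 0 + 3 * ((n : ℤ) + 1) * trinom n 0 := by
  simp only [trinom_zero_eq_coeff]
  exact_mod_cast coeff_trinomial_pow_recurrence n
end

section
/- For P(x) = x⁻¹ + 1 + x and k = 10, the sequence n ↦ A(n+1, 10, 0) − A(n+1, 10, 1), where A(n, k, a) := Σ_{j∈ℤ} C(n, kj + a)₂, satisfies a homogeneous linear recurrence with constant integer coefficients of order 10: there exist integers d₁, …, d₁₀ such that for all n ≥ 0, A(n+11, 10, 0) − A(n+11, 10, 1) = Σ_{i=1}^{10} dᵢ·(A(n+11−i, 10, 0) − A(n+11−i, 10, 1)). Consequently, Andrews' identity A(n+1, 10, 0) − A(n+1, 10, 1) = Fₙ(Fₙ+1)/2 follows rigorously for all n once it is verified for the finitely many values 0 ≤ n ≤ 20. -/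
open LaurentPolynomial

/-- The generalized Euler–Andrews sum `A(n, 10, a) = Σ_{j∈ℤ} C(n, 10j + a)₂`. -/
noncomputable def A10 (n : ℕ) (a : ℤ) : ℤ :=
  ∑ᶠ j : ℤ, trinom n (10 * j + a)

/-!
Put `P = x⁻¹ + 1 + x` and `χ(X) = D₁₀(X - 1) - 2`, with `D₁₀` the Dickson polynomial.
Since `P - 1 = x + x⁻¹`, the Dickson identity `D₁₀(x + x⁻¹) = x¹⁰ + x⁻¹⁰` gives
`χ(P) = x¹⁰ + x⁻¹⁰ - 2 = (x¹⁰ - 1)² x⁻¹⁰`. Summing the coefficients over a residue class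
mod 10 kills every multiple of `x¹⁰ - 1`, so each `n ↦ A(n, 10, a)` satisfies the order-10
recurrence with characteristic polynomial `χ = (X - 3)(X + 1)(X² - 3X + 1)²(X² - X - 1)²`.
Its roots include `-1, φ, ψ, φ², ψ²`, the characteristic roots of `Fₙ` and `Fₙ²`, so
`Fₙ(Fₙ + 1)/2` satisfies the same recurrence, and two solutions of an order-10 recurrence
agreeing on ten initial values agree everywhere.
-/

open Polynomial

namespace LinearRecurrence

variable {R S : Type*} [CommRing R] [CommRing S] [Algebra R S] (E : LinearRecurrence R)

theorem aeval_charPoly (q : S) :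
    aeval q E.charPoly = q ^ E.order - ∑ i, E.coeffs i • q ^ (i : ℕ) := by
  simp [charPoly, Algebra.smul_def]

theorem isSolution_map_pow (L : S →ₗ[R] R) {d q : S} (hL : ∀ g, L (d * g) = 0)
    (hq : d ∣ aeval q E.charPoly) :
    E.IsSolution fun n => L (q ^ n) := by
  intro n
  obtain ⟨g, hg⟩ := hq
  have h := hL (q ^ n * g)
  rw [← mul_left_comm, ← hg, aeval_charPoly, mul_sub, Finset.mul_sum] at h
  simp only [mul_smul_comm, ← pow_add, map_sub, map_sum, map_smul, smul_eq_mul] at h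
  exact sub_eq_zero.1 h

variable {E}

theorem IsSolution.sub {u v : ℕ → R} (hu : E.IsSolution u) (hv : E.IsSolution v) :
    E.IsSolution (u - v) := fun n => by
  simp only [Pi.sub_apply, hu n, hv n, mul_sub, Finset.sum_sub_distrib]

theorem IsSolution.shift {u : ℕ → R} (h : E.IsSolution u) : E.IsSolution fun n => u (n + 1) :=
  fun n => by simpa only [add_right_comm] using h (n + 1)

theorem IsSolution.of_const_mul {c : R} (hc : IsLeftRegular c) {u : ℕ → R}
    (h : E.IsSolution fun n => c * u n) : E.IsSolution u := fun n =>
  hc <| by simpa only [Finset.mul_sum, mul_left_comm c] using h n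

theorem IsSolution.eq_sum_rev {u : ℕ → R} (h : E.IsSolution u) (n : ℕ) :
    u (n + E.order) = ∑ i : Fin E.order, E.coeffs i.rev * u (n + E.order - (i + 1)) := by
  rw [h n, ← Equiv.sum_comp Fin.revPerm]
  refine Finset.sum_congr rfl fun i _ => ?_
  simp only [Fin.revPerm_apply, Fin.val_rev]
  congr 2
  omega

end LinearRecurrence

namespace LaurentPolynomial

variable {R : Type*} [CommRing R]

theorem aeval_dickson_comp_sub_one (m : ℕ) :
    aeval (T (-1) + 1 + T 1 : R[T;T⁻¹]) ((dickson 1 (1 : R) m).comp (X - 1) - 2) =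
      (T m - 1) * ((T m - 1) * T (-m)) := by
  have hT : (T 1 : R[T;T⁻¹]) * T (-1) = 1 := by rw [← T_add]; simp
  rw [map_sub, aeval_comp, aeval_def, eval₂_eq_eval_map, map_dickson, map_one]
  simp only [map_sub, aeval_X, map_one, map_ofNat]
  rw [show T (-1) + 1 + T 1 - 1 = (T 1 + T (-1) : R[T;T⁻¹]) by ring,
    dickson_one_one_eval_add_inv _ _ hT, T_pow, T_pow, mul_one, mul_neg_one]
  have hm : (T m : R[T;T⁻¹]) * T (-m) = 1 := by rw [← T_add]; simp
  linear_combination (2 - T (m : ℤ)) * hm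

theorem coeff_T_mul_s16 (n k : ℤ) (f : R[T;T⁻¹]) : (T n * f).coeff k = f.coeff (k - n) := by
  rw [T, AddMonoidAlgebra.coeff_single_mul_apply, one_mul, neg_add_eq_sub]

variable {m : ℤ}

theorem hasFiniteSupport_coeff_mul_add (hm : m ≠ 0) (f : R[T;T⁻¹]) (a : ℤ) :
    Function.HasFiniteSupport fun j : ℤ => f.coeff (m * j + a) :=
  (f.coeff.support.finite_toSet.preimage (f := fun j => m * j + a)
    fun x _ y _ h => by simpa [hm] using h).subset fun _ hj => Finsupp.mem_support_iff.2 hj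

noncomputable def residueSum (hm : m ≠ 0) (a : ℤ) : R[T;T⁻¹] →ₗ[R] R where
  toFun f := ∑ᶠ j : ℤ, f.coeff (m * j + a)
  map_add' f g := by
    simpa using finsum_add_distrib (hasFiniteSupport_coeff_mul_add hm f a)
      (hasFiniteSupport_coeff_mul_add hm g a)
  map_smul' r f := by
    simpa using (smul_finsum' r (hasFiniteSupport_coeff_mul_add hm f a)).symm

theorem residueSum_apply (hm : m ≠ 0) (a : ℤ) (f : R[T;T⁻¹]) :
    residueSum hm a f = ∑ᶠ j : ℤ, f.coeff (m * j + a) :=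
  rfl

theorem residueSum_T_sub_one_mul (hm : m ≠ 0) (a : ℤ) (f : R[T;T⁻¹]) :
    residueSum hm a ((T m - 1) * f) = 0 := by
  have hshift : ∑ᶠ j : ℤ, f.coeff (m * j + a - m) = ∑ᶠ j : ℤ, f.coeff (m * j + a) := by
    rw [← finsum_comp_equiv (Equiv.addRight 1)]
    refine finsum_congr fun j => ?_
    rw [Equiv.coe_addRight, mul_add_one, add_right_comm, add_sub_cancel_right]
  simp only [residueSum_apply, sub_mul, one_mul, AddMonoidAlgebra.coeff_sub, Finsupp.coe_sub,
    Pi.sub_apply, coeff_T_mul_s16]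
  rw [finsum_sub_distrib, hshift, sub_self]
  · simpa only [← add_sub_assoc] using hasFiniteSupport_coeff_mul_add hm f (a - m)
  · exact hasFiniteSupport_coeff_mul_add hm f a

end LaurentPolynomial

def andrewsRecurrence : LinearRecurrence ℤ :=
  ⟨10, ![3, -10, -15, 60, 15, -98, 35, 40, -35, 10]⟩

theorem andrewsRecurrence_charPoly :
    andrewsRecurrence.charPoly = (dickson 1 1 10 : ℤ[X]).comp (X - 1) - 2 := by
  rw [LinearRecurrence.charPoly, andrewsRecurrence]
  simp only [Fin.sum_univ_succ, Matrix.cons_val_zero, Matrix.cons_val_succ, Fin.val_zero,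
    Fin.val_succ, ← C_mul_X_pow_eq_monomial, eq_intCast, Int.cast_one, Nat.cast_one, Nat.reduceAdd,
    dickson_add_two, dickson_one, dickson_zero, sub_comp, mul_comp, X_comp, ofNat_comp, one_comp]
  ring

theorem A10_eq_residueSum (n : ℕ) (a : ℤ) :
    A10 n a = residueSum (by norm_num : (10 : ℤ) ≠ 0) a ((T (-1) + 1 + T 1) ^ n) :=
  rfl

theorem isSolution_A10 (a : ℤ) : andrewsRecurrence.IsSolution fun n => A10 n a := by
  simp only [A10_eq_residueSum]
  refine andrewsRecurrence.isSolution_map_pow _ (residueSum_T_sub_one_mul _ a)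
    ⟨(T 10 - 1) * T (-10), ?_⟩
  rw [andrewsRecurrence_charPoly, aeval_dickson_comp_sub_one, Nat.cast_ofNat]

theorem isSolution_fib_mul_fib_add_one :
    andrewsRecurrence.IsSolution fun n => (Nat.fib n : ℤ) * (Nat.fib n + 1) := by
  intro n
  rw [andrewsRecurrence]
  dsimp only
  simp only [Fin.sum_univ_succ, Matrix.cons_val_zero, Matrix.cons_val_succ, Fin.val_zero,
    Fin.val_succ, add_zero, Nat.fib_add_two, Nat.cast_add]
  ring

theorem isSolution_fib_mul_fib_add_one_div_two :
    andrewsRecurrence.IsSolution fun n => (Nat.fib n : ℤ) * (Nat.fib n + 1) / 2 := by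
  refine LinearRecurrence.IsSolution.of_const_mul (c := 2)
    (IsLeftCancelMulZero.mul_left_cancel_of_ne_zero two_ne_zero) ?_
  simpa only [Int.mul_ediv_cancel' (Int.even_mul_succ_self _).two_dvd]
    using isSolution_fib_mul_fib_add_one

/-- The sequence `n ↦ A(n+1, 10, 0) − A(n+1, 10, 1)` satisfies a homogeneous linear
recurrence with constant integer coefficients of order `10`; consequently Andrews'
identity `A(n+1,10,0) − A(n+1,10,1) = Fₙ(Fₙ+1)/2` holds for all `n` once it is
verified for `0 ≤ n ≤ 20`. -/
theorem andrews_cfinite_and_finite_check :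
    (∃ d : Fin 10 → ℤ, ∀ n : ℕ,
        A10 (n + 11) 0 - A10 (n + 11) 1 =
          ∑ i : Fin 10, d i *
            (A10 (n + 11 - ((i : ℕ) + 1)) 0 - A10 (n + 11 - ((i : ℕ) + 1)) 1)) ∧
    ((∀ n : ℕ, n ≤ 20 →
        A10 (n + 1) 0 - A10 (n + 1) 1 = (Nat.fib n : ℤ) * ((Nat.fib n : ℤ) + 1) / 2) →
      ∀ n : ℕ,
        A10 (n + 1) 0 - A10 (n + 1) 1 = (Nat.fib n : ℤ) * ((Nat.fib n : ℤ) + 1) / 2) := by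
  have hA : andrewsRecurrence.IsSolution fun n => A10 n 0 - A10 n 1 :=
    (isSolution_A10 0).sub (isSolution_A10 1)
  refine ⟨⟨fun i => andrewsRecurrence.coeffs i.rev, fun n => hA.eq_sum_rev (n + 1)⟩,
    fun hbase => ?_⟩
  refine congrFun ((andrewsRecurrence.eq_iff_eqOn_range_order _ _ hA.shift
    isSolution_fib_mul_fib_add_one_div_two).2 fun n hn => hbase n ?_)
  have : n < 10 := Finset.mem_range.1 hn
  omega
end
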